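/- arXiv:1601.05039 — 5 statements merged into one kernel-verified Lean document; each statement's English description precedes it below -/
import Mathlib

section
/- For every α > 0 and all u₁, u₂ > 0, the entropy density h(u₁,u₂) = (u₁/u₂)^α u₁² + (u₁/u₂)^{-α} u₂² + u₁ - log u₁ + u₂ - log u₂ satisfies h(u₁,u₂) ≥ (u₁² + u₂²)/2. -/
open Real

/-- The larger of the two squares always carries a weight `≥ 1`. -/
theorem max_sq_le_rpow_div_mul_sq_add {a b α : ℝ} (ha : 0 < a) (hb : 0 < b) (hα : 0 ≤ α) :
    max (a ^ 2) (b ^ 2) ≤ (a / b) ^ α * a ^ 2 + (a / b) ^ (-α) * b ^ 2 := by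
  rcases le_total b a with hle | hle
  · have hw : 1 ≤ (a / b) ^ α := one_le_rpow ((one_le_div hb).mpr hle) hα
    have hsq : b ^ 2 ≤ a ^ 2 := pow_le_pow_left₀ hb.le hle 2
    rw [max_eq_left hsq]
    have : 0 ≤ (a / b) ^ (-α) * b ^ 2 := by positivity
    linarith [le_mul_of_one_le_left (sq_nonneg a) hw]
  · have hw : 1 ≤ (a / b) ^ (-α) :=
      one_le_rpow_of_pos_of_le_one_of_nonpos (div_pos ha hb) ((div_le_one hb).mpr hle) (neg_nonpos.mpr hα)
    have hsq : a ^ 2 ≤ b ^ 2 := pow_le_pow_left₀ ha.le hle 2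
    rw [max_eq_right hsq]
    have : 0 ≤ (a / b) ^ α * a ^ 2 := by positivity
    linarith [le_mul_of_one_le_left (sq_nonneg b) hw]

theorem stmt_2 (α u₁ u₂ : ℝ) (hα : 0 < α) (h1 : 0 < u₁) (h2 : 0 < u₂) :
    (u₁ / u₂) ^ α * u₁ ^ 2 + (u₁ / u₂) ^ (-α) * u₂ ^ 2
      + u₁ - Real.log u₁ + u₂ - Real.log u₂ ≥ (u₁ ^ 2 + u₂ ^ 2) / 2 := by
  have hsq := max_sq_le_rpow_div_mul_sq_add h1 h2 hα.le
  have hlog₁ := log_le_sub_one_of_pos h1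
  have hlog₂ := log_le_sub_one_of_pos h2
  linarith [le_max_left (u₁ ^ 2) (u₂ ^ 2), le_max_right (u₁ ^ 2) (u₂ ^ 2)]
end

section
/- For every α > 0 and all u₁, u₂ > 0, the Hessian of h(u₁,u₂) = (u₁/u₂)^α u₁² + (u₁/u₂)^{-α} u₂² + u₁ - log u₁ + u₂ - log u₂ is positive definite; equivalently, h is strictly convex on (0,∞)². -/
/-!
Put `p = (α + 2) / 2 ≥ 1`. Since `y² (x/y)^(α+2) = (y (x/y)^p)²`, the density splits as
`h(x, y) = (y (x/y)^p)² + (x (y/x)^p)² + (x - log x) + (y - log y)`.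
The map `(x, y) ↦ y (x/y)^p` is the perspective of the convex function `t ↦ t^p`, hence convex and
nonnegative, so its square is convex; the same holds with `x` and `y` exchanged. The last two terms
form a strictly convex function of `(x, y)`, because `t ↦ t - log t` is strictly convex.
-/

open Set Real

theorem ConvexOn.perspective {s : Set ℝ} {g : ℝ → ℝ} (hg : ConvexOn ℝ s g) :
    ConvexOn ℝ {u : ℝ × ℝ | 0 < u.2 ∧ u.1 / u.2 ∈ s} (fun u => u.2 * g (u.1 / u.2)) := by
  suffices h : ∀ ⦃x : ℝ × ℝ⦄, 0 < x.2 → x.1 / x.2 ∈ s → ∀ ⦃y : ℝ × ℝ⦄, 0 < y.2 →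
      y.1 / y.2 ∈ s → ∀ ⦃a b : ℝ⦄, 0 ≤ a → 0 ≤ b → a + b = 1 →
      (0 < (a • x + b • y).2 ∧ (a • x + b • y).1 / (a • x + b • y).2 ∈ s) ∧
        (a • x + b • y).2 * g ((a • x + b • y).1 / (a • x + b • y).2) ≤
          a • (x.2 * g (x.1 / x.2)) + b • (y.2 * g (y.1 / y.2)) from
    ⟨fun _ hx _ hy _ _ ha hb hab => (h hx.1 hx.2 hy.1 hy.2 ha hb hab).1,
      fun _ hx _ hy _ _ ha hb hab => (h hx.1 hx.2 hy.1 hy.2 ha hb hab).2⟩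
  rintro ⟨x₁, x₂⟩ hx₂ hxs ⟨y₁, y₂⟩ hy₂ hys a b ha hb hab
  simp only [Prod.smul_mk, Prod.mk_add_mk, smul_eq_mul] at *
  set c := a * x₂ + b * y₂
  have hc : 0 < c := (convex_Ioi (0 : ℝ)) hx₂ hy₂ ha hb hab
  -- the ratio at the combined point is a convex combination of the ratios at `x` and `y`
  have hwx : 0 ≤ a * x₂ / c := by positivity
  have hwy : 0 ≤ b * y₂ / c := by positivity
  have hw : a * x₂ / c + b * y₂ / c = 1 := by rw [← add_div, div_self hc.ne']
  have hratio : (a * x₁ + b * y₁) / c = a * x₂ / c * (x₁ / x₂) + b * y₂ / c * (y₁ / y₂) := by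
    field_simp
  refine ⟨⟨hc, hratio ▸ hg.1 hxs hys hwx hwy hw⟩, ?_⟩
  calc c * g ((a * x₁ + b * y₁) / c)
      = c * g (a * x₂ / c * (x₁ / x₂) + b * y₂ / c * (y₁ / y₂)) := by rw [hratio]
    _ ≤ c * (a * x₂ / c * g (x₁ / x₂) + b * y₂ / c * g (y₁ / y₂)) :=
        mul_le_mul_of_nonneg_left (hg.2 hxs hys hwx hwy hw) hc.le
    _ = a * (x₂ * g (x₁ / x₂)) + b * (y₂ * g (y₁ / y₂)) := by field_simp

theorem convexOn_sq_mul_div_rpow {p : ℝ} (hp : 1 ≤ p) :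
    ConvexOn ℝ (Ioi 0 ×ˢ Ioi 0) (fun u : ℝ × ℝ => (u.2 * (u.1 / u.2) ^ p) ^ 2) := by
  have hpersp := (convexOn_rpow hp).perspective.subset
    (fun u hu => ⟨hu.2, div_nonneg (le_of_lt hu.1) (le_of_lt hu.2)⟩)
    ((convex_Ioi 0).prod (convex_Ioi 0))
  refine hpersp.pow (fun u hu => ?_) 2
  obtain ⟨hu₁, hu₂⟩ : 0 < u.1 ∧ 0 < u.2 := hu
  positivity

theorem convexOn_sq_mul_div_rpow' {p : ℝ} (hp : 1 ≤ p) :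
    ConvexOn ℝ (Ioi 0 ×ˢ Ioi 0) (fun u : ℝ × ℝ => (u.1 * (u.2 / u.1) ^ p) ^ 2) := by
  have h := (convexOn_sq_mul_div_rpow hp).comp_linearMap (LinearEquiv.prodComm ℝ ℝ ℝ).toLinearMap
  rwa [show ⇑(LinearEquiv.prodComm ℝ ℝ ℝ).toLinearMap = Prod.swap from rfl,
    preimage_swap_prod] at h

theorem StrictConvexOn.fst_add_snd {E F : Type*} [AddCommGroup E] [Module ℝ E]
    [AddCommGroup F] [Module ℝ F] {s : Set E} {t : Set F} {f : E → ℝ} {g : F → ℝ}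
    (hf : StrictConvexOn ℝ s f) (hg : StrictConvexOn ℝ t g) :
    StrictConvexOn ℝ (s ×ˢ t) (fun u => f u.1 + g u.2) := by
  refine ⟨hf.1.prod hg.1, fun x hx y hy hxy a b ha hb hab => ?_⟩
  simp only [Prod.fst_add, Prod.snd_add, Prod.smul_fst, Prod.smul_snd, smul_eq_mul]
  rcases not_and_or.1 (mt Prod.ext_iff.2 hxy) with h₁ | h₂
  · have hf' := hf.2 hx.1 hy.1 h₁ ha hb hab
    have hg' := hg.convexOn.2 hx.2 hy.2 ha.le hb.le hab
    simp only [smul_eq_mul] at hf' hg'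
    linarith
  · have hf' := hf.convexOn.2 hx.1 hy.1 ha.le hb.le hab
    have hg' := hg.2 hx.2 hy.2 h₂ ha hb hab
    simp only [smul_eq_mul] at hf' hg'
    linarith

theorem strictConvexOn_sub_log : StrictConvexOn ℝ (Ioi 0) (fun t => t - log t) :=
  (convexOn_id (convex_Ioi 0)).sub_strictConcaveOn strictConcaveOn_log_Ioi

theorem sq_mul_div_rpow_half_add_two (α : ℝ) {x y : ℝ} (hx : 0 < x) (hy : 0 < y) :
    (y * (x / y) ^ ((α + 2) / 2)) ^ 2 = (x / y) ^ α * x ^ 2 := by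
  have hxy : 0 < x / y := div_pos hx hy
  rw [mul_pow, ← rpow_natCast ((x / y) ^ _), ← rpow_mul hxy.le, Nat.cast_ofNat,
    div_mul_cancel₀ _ two_ne_zero, rpow_add hxy, rpow_two]
  field_simp

/-- The entropy density `h` is strictly convex on `(0,∞)²`. -/
theorem stmt_4 (α : ℝ) (hα : 0 < α) :
    StrictConvexOn ℝ (Set.Ioi (0:ℝ) ×ˢ Set.Ioi (0:ℝ))
      (fun u : ℝ × ℝ =>
        (u.1 / u.2) ^ α * u.1 ^ 2 + (u.1 / u.2) ^ (-α) * u.2 ^ 2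
          + u.1 - Real.log u.1 + u.2 - Real.log u.2) := by
  have hp : 1 ≤ (α + 2) / 2 := by linarith
  have hsum :=
    ((convexOn_sq_mul_div_rpow hp).add (convexOn_sq_mul_div_rpow' hp)).add_strictConvexOn
      (strictConvexOn_sub_log.fst_add_snd strictConvexOn_sub_log)
  refine hsum.congr fun u ⟨hu₁, hu₂⟩ => ?_
  have hu : (u.1 / u.2) ^ (-α) = (u.2 / u.1) ^ α := by
    rw [rpow_neg (div_pos hu₁ hu₂).le, ← inv_rpow (div_pos hu₁ hu₂).le, inv_div]
  simp only [Pi.add_apply]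
  rw [sq_mul_div_rpow_half_add_two α hu₁ hu₂, sq_mul_div_rpow_half_add_two α hu₂ hu₁, hu]
  ring
end

section
/- Let a : (0,∞) → (0,∞) be C¹ with a(r) ≥ r|a'(r)| for all r > 0. Then for all u₁, u₂ > 0, a(u₁/u₂)²(u₁² + u₂²) ≤ a(1)²(u₁² + u₂² + u₁⁴/u₂² + u₂⁴/u₁²). -/
/-!
The condition `r |a'(r)| ≤ a(r)` says exactly that `a(r) / r` is antitone and `r a(r)` is monotone
on `(0, ∞)`. Hence `a(t) ≤ a(1) t` for `t ≥ 1` and `a(t) ≤ a(1) / t` for `t ≤ 1`, so in both cases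
`a(t)² ≤ a(1)² (t² + t⁻²)`. With `t = u₁ / u₂`, multiplying by `u₁² + u₂²` gives the claim.
-/

open Set

section MulAbsDerivLe

variable {a a' : ℝ → ℝ} (hderiv : ∀ r > 0, HasDerivAt a (a' r) r)
  (hcond : ∀ r > 0, r * |a' r| ≤ a r)
include hderiv hcond

theorem antitoneOn_div_self_of_mul_abs_deriv_le : AntitoneOn (fun r => a r / r) (Ioi 0) := by
  have hdiv : ∀ r ∈ Ioi (0 : ℝ), HasDerivAt (fun r => a r / r) ((a' r * r - a r * 1) / r ^ 2) r :=
    fun r hr => (hderiv r hr).div (hasDerivAt_id' r) (ne_of_gt hr)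
  refine antitoneOn_of_hasDerivWithinAt_nonpos (convex_Ioi 0)
    (fun r hr => (hdiv r hr).continuousAt.continuousWithinAt)
    (fun r hr => (hdiv r (interior_subset hr)).hasDerivWithinAt) fun r hr => ?_
  rw [interior_Ioi] at hr
  have : r * a' r ≤ a r := (mul_le_mul_of_nonneg_left (le_abs_self _) hr.le).trans (hcond r hr)
  exact div_nonpos_of_nonpos_of_nonneg (by linarith) (sq_nonneg r)

theorem monotoneOn_self_mul_of_mul_abs_deriv_le : MonotoneOn (fun r => r * a r) (Ioi 0) := by
  have hmul : ∀ r ∈ Ioi (0 : ℝ), HasDerivAt (fun r => r * a r) (1 * a r + r * a' r) r :=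
    fun r hr => (hasDerivAt_id' r).mul (hderiv r hr)
  refine monotoneOn_of_hasDerivWithinAt_nonneg (convex_Ioi 0)
    (fun r hr => (hmul r hr).continuousAt.continuousWithinAt)
    (fun r hr => (hmul r (interior_subset hr)).hasDerivWithinAt) fun r hr => ?_
  rw [interior_Ioi] at hr
  have : -(r * a' r) ≤ a r := by
    rw [← mul_neg]
    exact (mul_le_mul_of_nonneg_left (neg_le_abs _) hr.le).trans (hcond r hr)
  linarith

theorem sq_le_sq_mul_add_inv_sq_of_mul_abs_deriv_le {r₀ t : ℝ} (hr₀ : 0 < r₀) (ht : 0 < t) :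
    a t ^ 2 ≤ a r₀ ^ 2 * ((t / r₀) ^ 2 + (r₀ / t) ^ 2) := by
  have ha_nonneg : ∀ r > 0, 0 ≤ a r :=
    fun r hr => (mul_nonneg hr.le (abs_nonneg _)).trans (hcond r hr)
  have hat := ha_nonneg t ht
  rcases le_total r₀ t with hle | hle
  · have hbound : a t ≤ a r₀ * (t / r₀) := by
      have := antitoneOn_div_self_of_mul_abs_deriv_le hderiv hcond hr₀ ht hle
      rw [div_le_div_iff₀ ht hr₀] at this
      rw [mul_div, le_div_iff₀ hr₀]
      linarith
    calc a t ^ 2 ≤ (a r₀ * (t / r₀)) ^ 2 := pow_le_pow_left₀ hat hbound 2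
      _ ≤ a r₀ ^ 2 * ((t / r₀) ^ 2 + (r₀ / t) ^ 2) := by nlinarith [sq_nonneg (a r₀ * (r₀ / t))]
  · have hbound : a t ≤ a r₀ * (r₀ / t) := by
      have := monotoneOn_self_mul_of_mul_abs_deriv_le hderiv hcond ht hr₀ hle
      rw [mul_div, le_div_iff₀ ht]
      linarith
    calc a t ^ 2 ≤ (a r₀ * (r₀ / t)) ^ 2 := pow_le_pow_left₀ hat hbound 2
      _ ≤ a r₀ ^ 2 * ((t / r₀) ^ 2 + (r₀ / t) ^ 2) := by nlinarith [sq_nonneg (a r₀ * (t / r₀))]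

end MulAbsDerivLe

theorem stmt_9_general (a a' : ℝ → ℝ)
    (hderiv : ∀ r > 0, HasDerivAt a (a' r) r)
    (hcond : ∀ r > 0, r * |a' r| ≤ a r)
    (u₁ u₂ : ℝ) (h1 : 0 < u₁) (h2 : 0 < u₂) :
    a (u₁ / u₂) ^ 2 * (u₁ ^ 2 + u₂ ^ 2) ≤
      a 1 ^ 2 * (u₁ ^ 2 + u₂ ^ 2 + u₁ ^ 4 / u₂ ^ 2 + u₂ ^ 4 / u₁ ^ 2) := by
  have hsq := sq_le_sq_mul_add_inv_sq_of_mul_abs_deriv_le hderiv hcond one_pos (div_pos h1 h2)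
  have hexpand : (u₁ ^ 2 + u₂ ^ 2) * ((u₁ / u₂ / 1) ^ 2 + (1 / (u₁ / u₂)) ^ 2) =
      u₁ ^ 2 + u₂ ^ 2 + u₁ ^ 4 / u₂ ^ 2 + u₂ ^ 4 / u₁ ^ 2 := by
    field_simp
    ring
  calc a (u₁ / u₂) ^ 2 * (u₁ ^ 2 + u₂ ^ 2)
      ≤ a 1 ^ 2 * ((u₁ / u₂ / 1) ^ 2 + (1 / (u₁ / u₂)) ^ 2) * (u₁ ^ 2 + u₂ ^ 2) :=
        mul_le_mul_of_nonneg_right hsq (by positivity)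
    _ = _ := by rw [mul_assoc, mul_comm _ (u₁ ^ 2 + u₂ ^ 2), hexpand]

theorem stmt_9 (a a' : ℝ → ℝ) (hpos : ∀ r > 0, 0 < a r)
    (hderiv : ∀ r > 0, HasDerivAt a (a' r) r)
    (hcont : ContinuousOn a' (Set.Ioi 0))
    (hcond : ∀ r > 0, r * |a' r| ≤ a r)
    (u₁ u₂ : ℝ) (h1 : 0 < u₁) (h2 : 0 < u₂) :
    a (u₁ / u₂) ^ 2 * (u₁ ^ 2 + u₂ ^ 2) ≤
      a 1 ^ 2 * (u₁ ^ 2 + u₂ ^ 2 + u₁ ^ 4 / u₂ ^ 2 + u₂ ^ 4 / u₁ ^ 2) :=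
  stmt_9_general a a' hderiv hcond u₁ u₂ h1 h2
end

section
/- Let α > 0 with α(α+2) > 1, and let a : (0,∞) → (0,∞) be C¹ with a(r) ≥ r|a'(r)| for all r > 0. For u₁, u₂ > 0 set r = u₁/u₂ and let M⁽¹⁾ be the symmetric matrix with M₁₁ = (α+2)((α+1)a(r) + r a'(r)) r^α, det M⁽¹⁾ = (α(α+2)a(r)² - r² a'(r)²) r^{2α+2}. Then M₁₁ > 0 and det M⁽¹⁾ > 0, so M⁽¹⁾ is positive definite. -/
theorem Matrix.posDef_fin_two_of_pos {M : Matrix (Fin 2) (Fin 2) ℝ} (hM : M.IsHermitian)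
    (h₀₀ : 0 < M 0 0) (hdet : 0 < M.det) : M.PosDef := by
  have hsymm : M 1 0 = M 0 1 := by simpa using hM.apply 0 1
  rw [Matrix.det_fin_two, hsymm] at hdet
  refine Matrix.posDef_iff_dotProduct_mulVec.mpr ⟨hM, fun x hx => ?_⟩
  have hquad : dotProduct (star x) (M.mulVec x) =
      M 0 0 * x 0 ^ 2 + 2 * M 0 1 * x 0 * x 1 + M 1 1 * x 1 ^ 2 := by
    simp only [dotProduct, Pi.star_apply, star_trivial, Matrix.mulVec, Fin.sum_univ_two, hsymm]
    ring
  rw [hquad]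
  by_cases hx₁ : x 1 = 0
  · have hx₀ : x 0 ≠ 0 := fun hx₀ => hx (by ext i; fin_cases i <;> assumption)
    rw [hx₁]
    nlinarith [mul_pos h₀₀ (pow_two_pos_of_ne_zero hx₀)]
  · -- completing the square: `M₀₀ q(x) = (M₀₀ x₀ + M₀₁ x₁)² + det M · x₁²`
    nlinarith [sq_nonneg (M 0 0 * x 0 + M 0 1 * x 1), mul_pos hdet (pow_two_pos_of_ne_zero hx₁)]

section

variable {α a b : ℝ} (ha : 0 < a) (hb : |b| ≤ a)
include ha hb

lemma pos_add_one_mul_add_of_abs_le (hα : 0 < α) : 0 < (α + 1) * a + b := by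
  nlinarith [neg_abs_le b]

lemma sq_lt_mul_add_two_mul_sq_of_abs_le (hα : 1 < α * (α + 2)) : b ^ 2 < α * (α + 2) * a ^ 2 := by
  have hsq : b ^ 2 ≤ a ^ 2 := sq_le_sq' (neg_le_of_abs_le hb) (le_of_abs_le hb)
  nlinarith [pow_pos ha 2]

end

theorem stmt_17_general (α : ℝ) (hα : 0 < α) (hα2 : 1 < α * (α + 2))
    (a a' : ℝ → ℝ) (hpos : ∀ r > 0, 0 < a r)
    (hcond : ∀ r > 0, r * |a' r| ≤ a r)
    (u₁ u₂ : ℝ) (h1 : 0 < u₁) (h2 : 0 < u₂) :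
    let r : ℝ := u₁ / u₂
    (0 < (α + 2) * ((α + 1) * a r + r * a' r) * r ^ α) ∧
    (0 < (α * (α + 2) * a r ^ 2 - r ^ 2 * a' r ^ 2) * r ^ (2 * α + 2)) ∧
    (∀ M : Matrix (Fin 2) (Fin 2) ℝ, M.IsHermitian →
      M 0 0 = (α + 2) * ((α + 1) * a r + r * a' r) * r ^ α →
      M.det = (α * (α + 2) * a r ^ 2 - r ^ 2 * a' r ^ 2) * r ^ (2 * α + 2) →
      M.PosDef) := by
  intro r
  have hr : 0 < r := div_pos h1 h2
  have ha : 0 < a r := hpos r hr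
  have hb : |r * a' r| ≤ a r := by rw [abs_mul, abs_of_pos hr]; exact hcond r hr
  have h₀₀ : 0 < (α + 2) * ((α + 1) * a r + r * a' r) * r ^ α := by
    have := pos_add_one_mul_add_of_abs_le ha hb hα
    positivity
  have hdet : 0 < (α * (α + 2) * a r ^ 2 - r ^ 2 * a' r ^ 2) * r ^ (2 * α + 2) := by
    have := sq_lt_mul_add_two_mul_sq_of_abs_le ha hb hα2
    have : 0 < α * (α + 2) * a r ^ 2 - r ^ 2 * a' r ^ 2 := by rw [← mul_pow]; linarith
    positivity
  exact ⟨h₀₀, hdet, fun M hM hM₀₀ hMdet =>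
    Matrix.posDef_fin_two_of_pos hM (hM₀₀ ▸ h₀₀) (hMdet ▸ hdet)⟩

theorem stmt_17 (α : ℝ) (hα : 0 < α) (hα2 : 1 < α * (α + 2))
    (a a' : ℝ → ℝ) (hpos : ∀ r > 0, 0 < a r)
    (hderiv : ∀ r > 0, HasDerivAt a (a' r) r)
    (hcont : ContinuousOn a' (Set.Ioi 0))
    (hcond : ∀ r > 0, r * |a' r| ≤ a r)
    (u₁ u₂ : ℝ) (h1 : 0 < u₁) (h2 : 0 < u₂) :
    let r : ℝ := u₁ / u₂
    (0 < (α + 2) * ((α + 1) * a r + r * a' r) * r ^ α) ∧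
    (0 < (α * (α + 2) * a r ^ 2 - r ^ 2 * a' r ^ 2) * r ^ (2 * α + 2)) ∧
    (∀ M : Matrix (Fin 2) (Fin 2) ℝ, M.IsHermitian →
      M 0 0 = (α + 2) * ((α + 1) * a r + r * a' r) * r ^ α →
      M.det = (α * (α + 2) * a r ^ 2 - r ^ 2 * a' r ^ 2) * r ^ (2 * α + 2) →
      M.PosDef) :=
  stmt_17_general α hα hα2 a a' hpos hcond u₁ u₂ h1 h2
end

section
/- Let α > 0 and define w₁(u₁,u₂) = (α+2)u₁^{α+1}u₂^{-α} - α u₁^{-α-1}u₂^{α+2} - u₁^{-1} + 1 and w₂(u₁,u₂) = (α+2)u₁^{-α}u₂^{α+1} - α u₁^{α+2}u₂^{-α-1} - u₂^{-1} + 1. Then the map (u₁,u₂) ↦ (w₁,w₂) is a bijection from (0,∞)² onto ℝ². -/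
/-!
The map is the gradient of the entropy
`h(u) = u₁^(α+2) u₂^(-α) + u₁^(-α) u₂^(α+2) + u₁ - log u₁ + u₂ - log u₂`
on `(0, ∞)²`. Weighted AM-GM shows that `(a, b) ↦ a^(α+2) b^(-α)` lies above its tangent
planes; adding the tangent inequalities at two points makes `∇h` strictly monotone, hence
injective. Given `w`, the function `h(u) - ⟪w, u⟫` is at least `u₁² + u₂² - log u₁ - log u₂`
up to linear terms, so it attains its minimum inside the open quadrant, and there `∇h(u) = w`.
-/

open Real Set

section TangentInequality

variable {α a b c d : ℝ}

theorem tangent_le_rpow_add_two_mul_rpow_neg (hα : 0 ≤ α) (ha : 0 < a) (hb : 0 < b)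
    (hc : 0 < c) (hd : 0 < d) :
    a ^ (α + 2) * b ^ (-α) + (α + 2) * a ^ (α + 1) * b ^ (-α) * (c - a)
      - α * a ^ (α + 2) * b ^ (-α - 1) * (d - b) ≤ c ^ (α + 2) * d ^ (-α) := by
  have hα2 : 0 < α + 2 := by linarith
  have amgm := geom_mean_le_arith_mean3_weighted (w₁ := 1 / (α + 2)) (w₂ := α / (α + 2))
    (w₃ := 1 / (α + 2)) (p₁ := c ^ (α + 2) * d ^ (-α)) (p₂ := a ^ (α + 2) * b ^ (-α - 1) * d)
    (p₃ := a ^ (α + 2) * b ^ (-α)) (by positivity) (by positivity) (by positivity)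
    (by positivity) (by positivity) (by positivity) (by field_simp; ring)
  have geom_mean : (c ^ (α + 2) * d ^ (-α)) ^ (1 / (α + 2)) *
      (a ^ (α + 2) * b ^ (-α - 1) * d) ^ (α / (α + 2)) * (a ^ (α + 2) * b ^ (-α)) ^ (1 / (α + 2))
        = a ^ (α + 1) * b ^ (-α) * c := by
    rw [← exp_log ha, ← exp_log hb, ← exp_log hc, ← exp_log hd]
    simp only [← exp_add, ← exp_mul, exp_eq_exp]
    field_simp
    ring
  have ha2 : a ^ (α + 2) = a ^ (α + 1) * a := by
    rw [← rpow_add_one ha.ne']; ring_nf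
  have hb1 : b ^ (-α) = b ^ (-α - 1) * b := by
    rw [← rpow_add_one hb.ne']; ring_nf
  rw [geom_mean] at amgm
  have := mul_le_mul_of_nonneg_left amgm hα2.le
  field_simp at this
  rw [ha2, hb1] at this ⊢
  linear_combination this

theorem rpow_add_two_mul_rpow_neg_grad_monotone (hα : 0 ≤ α) (ha : 0 < a) (hb : 0 < b)
    (hc : 0 < c) (hd : 0 < d) :
    0 ≤ ((α + 2) * a ^ (α + 1) * b ^ (-α) - (α + 2) * c ^ (α + 1) * d ^ (-α)) * (a - c)
      - (α * a ^ (α + 2) * b ^ (-α - 1) - α * c ^ (α + 2) * d ^ (-α - 1)) * (b - d) := by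
  linarith [tangent_le_rpow_add_two_mul_rpow_neg hα ha hb hc hd,
    tangent_le_rpow_add_two_mul_rpow_neg hα hc hd ha hb]

theorem sq_add_sq_le_rpow_add_two_mul_rpow_neg_add (hα : 0 ≤ α) (ha : 0 < a) (hb : 0 < b) :
    a ^ 2 + b ^ 2 ≤ a ^ (α + 2) * b ^ (-α) + a ^ (-α) * b ^ (α + 2) := by
  have diag : ∀ t : ℝ, 0 < t →
      t ^ (α + 2) * t ^ (-α) = t ^ 2 ∧ t ^ (α + 2) * t ^ (-α - 1) = t := by
    intro t ht
    refine ⟨?_, ?_⟩ <;> rw [← rpow_add ht]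
    · rw [show α + 2 + -α = 2 by ring, rpow_two]
    · rw [show α + 2 + (-α - 1) = 1 by ring, rpow_one]
  obtain ⟨ha2, ha1⟩ := diag a ha
  obtain ⟨hb2, hb1⟩ := diag b hb
  have tangent_ab : a ^ 2 - α * a * (b - a) ≤ a ^ (α + 2) * b ^ (-α) := by
    linear_combination
      tangent_le_rpow_add_two_mul_rpow_neg hα ha ha ha hb - ha2 + α * (b - a) * ha1
  have tangent_ba : b ^ 2 - α * b * (a - b) ≤ b ^ (α + 2) * a ^ (-α) := by
    linear_combination
      tangent_le_rpow_add_two_mul_rpow_neg hα hb hb hb ha - hb2 + α * (a - b) * hb1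
  nlinarith [sq_nonneg (a - b)]

end TangentInequality

theorem IsCompact.exists_isMinOn_of_sublevel_subset {X β : Type*} [TopologicalSpace X]
    [LinearOrder β] [TopologicalSpace β] [ClosedIicTopology β] {f : X → β} {U K : Set X}
    {x₀ : X} (hK : IsCompact K) (hKU : K ⊆ U) (hf : ContinuousOn f K) (hx₀ : x₀ ∈ U)
    (hsub : ∀ x ∈ U, f x ≤ f x₀ → x ∈ K) : ∃ x ∈ U, IsMinOn f U x := by
  obtain ⟨x, hxK, hmin⟩ := hK.exists_isMinOn ⟨x₀, hsub x₀ hx₀ le_rfl⟩ hf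
  refine ⟨x, hKU hxK, fun y hy => ?_⟩
  by_cases hy₀ : f y ≤ f x₀
  · exact hmin (hsub y hy hy₀)
  · exact (hmin (hsub x₀ hx₀ le_rfl)).trans (not_le.mp hy₀).le

theorem neg_sq_le_sq_add_sub_log_sub_mul (w : ℝ) {t : ℝ} (ht : 0 < t) :
    -w ^ 2 ≤ t ^ 2 + t - log t - w * t := by
  nlinarith [log_le_sub_one_of_pos ht, sq_nonneg (t - w / 2), sq_nonneg w]

theorem exists_Icc_of_sq_add_sub_log_sub_mul_le (w B : ℝ) :
    ∃ ε > 0, ∃ M, ∀ t > 0, t ^ 2 + t - log t - w * t ≤ B → t ∈ Icc ε M := by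
  set M := |w| + max B 0 + 1
  refine ⟨exp (-(B + |w| * M)), exp_pos _, M, fun t ht hB => ?_⟩
  have hlog := log_le_sub_one_of_pos ht
  have hwt : w * t ≤ |w| * t := mul_le_mul_of_nonneg_right (le_abs_self w) ht.le
  have htM : t ≤ M := by
    by_contra! h
    have h₁ : 0 ≤ t - 1 := by linarith [abs_nonneg w, le_max_right B 0]
    have h₂ : 0 ≤ t - |w| - max B 0 - 1 := by linarith
    nlinarith [mul_nonneg ht.le h₂, mul_nonneg (le_max_right B 0) h₁, le_max_left B 0]
  refine ⟨?_, htM⟩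
  rw [← exp_log ht, exp_le_exp]
  nlinarith [mul_le_mul_of_nonneg_left htM (abs_nonneg w)]

-- `(u₁/u₂)^α u₁² = u₁^(α+2) u₂^(-α)` on the open quadrant
noncomputable def entropy (α : ℝ) (u : ℝ × ℝ) : ℝ :=
  u.1 ^ (α + 2) * u.2 ^ (-α) + u.1 ^ (-α) * u.2 ^ (α + 2) + u.1 - log u.1 + u.2 - log u.2

noncomputable def entropyGrad (α : ℝ) (u : ℝ × ℝ) : ℝ × ℝ :=
  ((α + 2) * u.1 ^ (α + 1) * u.2 ^ (-α) - α * u.1 ^ (-α - 1) * u.2 ^ (α + 2) - u.1⁻¹ + 1,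
    (α + 2) * u.1 ^ (-α) * u.2 ^ (α + 1) - α * u.1 ^ (α + 2) * u.2 ^ (-α - 1) - u.2⁻¹ + 1)

section Entropy

variable {α : ℝ}

theorem sq_div_add_sq_div_le_inner_entropyGrad_sub (hα : 0 ≤ α) {a b c d : ℝ} (ha : 0 < a)
    (hb : 0 < b) (hc : 0 < c) (hd : 0 < d) :
    (a - c) ^ 2 / (a * c) + (b - d) ^ 2 / (b * d) ≤
      ((entropyGrad α (a, b)).1 - (entropyGrad α (c, d)).1) * (a - c)
        + ((entropyGrad α (a, b)).2 - (entropyGrad α (c, d)).2) * (b - d) := by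
  have mono_ab := rpow_add_two_mul_rpow_neg_grad_monotone hα ha hb hc hd
  have mono_ba := rpow_add_two_mul_rpow_neg_grad_monotone hα hb ha hd hc
  have inv_a : (c⁻¹ - a⁻¹) * (a - c) = (a - c) ^ 2 / (a * c) := by field_simp
  have inv_b : (d⁻¹ - b⁻¹) * (b - d) = (b - d) ^ 2 / (b * d) := by field_simp
  simp only [entropyGrad]
  linarith

theorem entropyGrad_injOn (hα : 0 ≤ α) : InjOn (entropyGrad α) (Ioi 0 ×ˢ Ioi 0) := by
  rintro ⟨a, b⟩ ⟨ha, hb⟩ ⟨c, d⟩ ⟨hc, hd⟩ h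
  simp only [mem_Ioi] at ha hb hc hd
  have key := sq_div_add_sq_div_le_inner_entropyGrad_sub hα ha hb hc hd
  rw [h, sub_self, sub_self, zero_mul, zero_mul, add_zero] at key
  obtain ⟨hac, hbd⟩ := (add_eq_zero_iff_of_nonneg (by positivity) (by positivity)).mp
    (le_antisymm key (by positivity))
  simp only [div_eq_zero_iff, ha.ne', hb.ne', hc.ne', hd.ne', mul_eq_zero, or_false,
    pow_eq_zero_iff two_ne_zero, sub_eq_zero] at hac hbd
  rw [hac, hbd]

theorem continuousOn_entropy : ContinuousOn (entropy α) (Ioi 0 ×ˢ Ioi 0) := by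
  rintro ⟨a, b⟩ ⟨ha, hb⟩
  simp only [mem_Ioi] at ha hb
  apply ContinuousAt.continuousWithinAt
  unfold entropy
  fun_prop (disch := simp [ha.ne', hb.ne'])

theorem hasDerivAt_entropy_fst {a : ℝ} (b : ℝ) (ha : 0 < a) :
    HasDerivAt (fun t => entropy α (t, b)) (entropyGrad α (a, b)).1 a := by
  have h := (((((hasDerivAt_rpow_const (p := α + 2) (Or.inl ha.ne')).mul_const (b ^ (-α))).add
    ((hasDerivAt_rpow_const (p := -α) (Or.inl ha.ne')).mul_const (b ^ (α + 2)))).add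
    (hasDerivAt_id' a)).sub (hasDerivAt_log ha.ne')).add_const b |>.sub_const (log b)
  refine h.congr_deriv ?_
  rw [show α + 2 - 1 = α + 1 by ring, entropyGrad]
  ring

theorem hasDerivAt_entropy_snd (a : ℝ) {b : ℝ} (hb : 0 < b) :
    HasDerivAt (fun t => entropy α (a, t)) (entropyGrad α (a, b)).2 b := by
  have h := (((((hasDerivAt_rpow_const (p := -α) (Or.inl hb.ne')).const_mul (a ^ (α + 2))).add
    ((hasDerivAt_rpow_const (p := α + 2) (Or.inl hb.ne')).const_mul (a ^ (-α)))).add_const a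
    |>.sub_const (log a)).add (hasDerivAt_id' b)).sub (hasDerivAt_log hb.ne')
  refine h.congr_deriv ?_
  rw [show α + 2 - 1 = α + 1 by ring, entropyGrad]
  ring

theorem exists_Icc_subset_of_entropy_sub_linear_le (hα : 0 ≤ α) (w : ℝ × ℝ) (B : ℝ) :
    ∃ ε M : ℝ × ℝ, Icc ε M ⊆ Ioi 0 ×ˢ Ioi 0 ∧ ∀ u ∈ Ioi 0 ×ˢ Ioi 0,
      entropy α u - (w.1 * u.1 + w.2 * u.2) ≤ B → u ∈ Icc ε M := by
  obtain ⟨ε₁, hε₁, M₁, H₁⟩ := exists_Icc_of_sq_add_sub_log_sub_mul_le w.1 (B + w.2 ^ 2)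
  obtain ⟨ε₂, hε₂, M₂, H₂⟩ := exists_Icc_of_sq_add_sub_log_sub_mul_le w.2 (B + w.1 ^ 2)
  refine ⟨(ε₁, ε₂), (M₁, M₂), fun u hu => ⟨hε₁.trans_le hu.1.1, hε₂.trans_le hu.1.2⟩, ?_⟩
  rintro ⟨a, b⟩ ⟨ha, hb⟩ hB
  simp only [mem_Ioi] at ha hb
  have hsq := sq_add_sq_le_rpow_add_two_mul_rpow_neg_add hα ha hb
  have hρa := neg_sq_le_sq_add_sub_log_sub_mul w.1 ha
  have hρb := neg_sq_le_sq_add_sub_log_sub_mul w.2 hb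
  simp only [entropy] at hB
  obtain ⟨ha₁, ha₂⟩ := H₁ a ha (by linarith)
  obtain ⟨hb₁, hb₂⟩ := H₂ b hb (by linarith)
  exact ⟨⟨ha₁, hb₁⟩, ⟨ha₂, hb₂⟩⟩

theorem exists_isMinOn_entropy_sub_linear (hα : 0 ≤ α) (w : ℝ × ℝ) :
    ∃ u ∈ Ioi 0 ×ˢ Ioi 0,
      IsMinOn (fun v => entropy α v - (w.1 * v.1 + w.2 * v.2)) (Ioi 0 ×ˢ Ioi 0) u := by
  obtain ⟨ε, M, hKU, hsub⟩ :=
    exists_Icc_subset_of_entropy_sub_linear_le hα w (entropy α (1, 1) - (w.1 + w.2))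
  refine isCompact_Icc.exists_isMinOn_of_sublevel_subset hKU
    ((continuousOn_entropy.mono hKU).sub (by fun_prop)) (x₀ := (1, 1)) (by norm_num) ?_
  intro u hu hle
  exact hsub u hu (by simpa using hle)

theorem entropyGrad_eq_of_isMinOn {w u : ℝ × ℝ} (hu : u ∈ Ioi 0 ×ˢ Ioi 0)
    (hmin : IsMinOn (fun v => entropy α v - (w.1 * v.1 + w.2 * v.2)) (Ioi 0 ×ˢ Ioi 0) u) :
    entropyGrad α u = w := by
  obtain ⟨a, b⟩ := u
  obtain ⟨ha, hb⟩ : 0 < a ∧ 0 < b := hu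
  have min_fst : IsLocalMin (fun t => entropy α (t, b) - (w.1 * t + w.2 * b)) a := by
    filter_upwards [eventually_gt_nhds ha] with t ht using isMinOn_iff.mp hmin _ ⟨ht, hb⟩
  have min_snd : IsLocalMin (fun t => entropy α (a, t) - (w.1 * a + w.2 * t)) b := by
    filter_upwards [eventually_gt_nhds hb] with t ht using isMinOn_iff.mp hmin _ ⟨ha, ht⟩
  have crit_fst := min_fst.hasDerivAt_eq_zero
    ((hasDerivAt_entropy_fst b ha).sub (((hasDerivAt_id' a).const_mul w.1).add_const (w.2 * b)))
  have crit_snd := min_snd.hasDerivAt_eq_zero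
    ((hasDerivAt_entropy_snd a hb).sub (((hasDerivAt_id' b).const_mul w.2).const_add (w.1 * a)))
  ext <;> linarith

theorem entropyGrad_surjOn (hα : 0 ≤ α) : SurjOn (entropyGrad α) (Ioi 0 ×ˢ Ioi 0) univ :=
  fun w _ =>
    let ⟨u, hu, hmin⟩ := exists_isMinOn_entropy_sub_linear hα w
    ⟨u, hu, entropyGrad_eq_of_isMinOn hu hmin⟩

end Entropy

theorem stmt_19 (α : ℝ) (hα : 0 < α) :
    Set.BijOn
      (fun u : ℝ × ℝ =>
        (((α + 2) * u.1 ^ (α + 1) * u.2 ^ (-α) - α * u.1 ^ (-α - 1) * u.2 ^ (α + 2)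
            - u.1⁻¹ + 1,
          (α + 2) * u.1 ^ (-α) * u.2 ^ (α + 1) - α * u.1 ^ (α + 2) * u.2 ^ (-α - 1)
            - u.2⁻¹ + 1) : ℝ × ℝ))
      (Set.Ioi (0:ℝ) ×ˢ Set.Ioi (0:ℝ)) Set.univ :=
  ⟨mapsTo_univ _ _, entropyGrad_injOn hα.le, entropyGrad_surjOn hα.le⟩
end
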